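/- Let z be a point of the upper half-plane ℍ and let φ : [0,∞) → [0,∞] be measurable. Then ∫_ℍ φ(u(z,w)) · ρ(z,w) dμ(w) = 8π ∫₀^∞ φ(u) · arsinh(√u) du, where both sides are extended-real-valued Lebesgue integrals. -/

import Mathlib

/-!
Write `z = x₀ + i y₀` and `w = x + i y`. The measure `y⁻² dx dy` pushed forward by `u(z, ·)` is
`4π du`: for fixed `y`, rescaling `x - x₀` by `2√(y₀ y)` gives `u = t² + (y - y₀)² / (4 y₀ y)`;
with `y = y₀ eʳ` the second term is `sinh²(r/2)` and the weight becomes `2 e^{-r/2} dr`, which by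
evenness may be replaced by `2 cosh(r/2) dr = 4 d(sinh(r/2))`. Polar coordinates in the resulting
`(t, s)`-plane finish the computation, and `ρ = 2 arsinh √u` gives the factor `8π`.
-/

open MeasureTheory
open scoped ENNReal

/-- `u(z,w) = |z − w|² / (4 Im z Im w)`. -/
noncomputable def hypu (z w : ℂ) : ℝ :=
  ‖z - w‖ ^ 2 / (4 * z.im * w.im)

/-- The hyperbolic distance `ρ(z,w) = 2 arsinh(|z − w| / (2 √(Im z Im w)))`. -/
noncomputable def hypd (z w : ℂ) : ℝ :=
  2 * Real.arsinh (‖z - w‖ / (2 * Real.sqrt (z.im * w.im)))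

open Set Real

theorem lintegral_range_eq_lintegral_abs_deriv_mul {f f' : ℝ → ℝ}
    (hf' : ∀ x, HasDerivAt f (f' x) x) (hf : Function.Injective f) (g : ℝ → ℝ≥0∞) :
    ∫⁻ x in range f, g x = ∫⁻ x, ENNReal.ofReal |f' x| * g (f x) := by
  simpa [image_univ] using lintegral_image_eq_lintegral_abs_deriv_mul MeasurableSet.univ
    (fun x _ => (hf' x).hasDerivWithinAt) hf.injOn g

theorem lintegral_eq_lintegral_abs_deriv_mul {f f' : ℝ → ℝ}
    (hf' : ∀ x, HasDerivAt f (f' x) x) (hf : Function.Bijective f) (g : ℝ → ℝ≥0∞) :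
    ∫⁻ x, g x = ∫⁻ x, ENNReal.ofReal |f' x| * g (f x) := by
  simpa [hf.2.range_eq] using lintegral_range_eq_lintegral_abs_deriv_mul hf' hf.1 g

theorem lintegral_comp_sub_div (g : ℝ → ℝ≥0∞) (a : ℝ) {c : ℝ} (hc : 0 < c) :
    ∫⁻ x, g ((x - a) / c) = ENNReal.ofReal c * ∫⁻ t, g t := by
  have hbij : Function.Bijective fun t => a + c * t :=
    ⟨fun s t h => mul_left_cancel₀ hc.ne' (add_left_cancel h),
      fun x => ⟨(x - a) / c, by field_simp; ring⟩⟩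
  rw [lintegral_eq_lintegral_abs_deriv_mul (f := fun t => a + c * t)
    (fun t => ((hasDerivAt_id' t).const_mul c).const_add a) hbij,
    ← lintegral_const_mul' _ _ ENNReal.ofReal_ne_top]
  refine lintegral_congr fun t => ?_
  simp [abs_of_pos hc, hc.ne']

theorem lintegral_Ioi_eq_lintegral_mul_exp (g : ℝ → ℝ≥0∞) {a : ℝ} (ha : 0 < a) :
    ∫⁻ y in Ioi 0, g y = ∫⁻ r, ENNReal.ofReal (a * exp r) * g (a * exp r) := by
  have hrange : range (fun r => a * exp r) = Ioi 0 := by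
    ext y
    refine ⟨fun ⟨r, hr⟩ => hr ▸ mul_pos ha (exp_pos r), fun hy => ⟨log (y / a), ?_⟩⟩
    simp only
    rw [exp_log (div_pos hy ha)]; field_simp
  rw [← hrange, lintegral_range_eq_lintegral_abs_deriv_mul
    (fun r => (hasDerivAt_exp r).const_mul a)
    (fun s t h => exp_injective (mul_left_cancel₀ ha.ne' h))]
  simp_rw [abs_of_pos (mul_pos ha (exp_pos _))]

theorem lintegral_exp_neg_half_mul_of_even {K : ℝ → ℝ≥0∞} (hK : Measurable K)
    (heven : ∀ r, K (-r) = K r) :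
    ∫⁻ r, ENNReal.ofReal (2 * exp (-(r / 2))) * K r =
      ∫⁻ r, ENNReal.ofReal (2 * cosh (r / 2)) * K r := by
  have hflip : ∫⁻ r, ENNReal.ofReal (exp (r / 2)) * K r =
      ∫⁻ r, ENNReal.ofReal (exp (-(r / 2))) * K r := by
    rw [← lintegral_neg_eq_self]
    simp only [heven, neg_div]
  calc ∫⁻ r, ENNReal.ofReal (2 * exp (-(r / 2))) * K r
      = 2 * ∫⁻ r, ENNReal.ofReal (exp (-(r / 2))) * K r := by
        rw [← lintegral_const_mul _ (by fun_prop)]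
        simp_rw [ENNReal.ofReal_mul zero_le_two, ENNReal.ofReal_ofNat, mul_assoc]
    _ = ∫⁻ r, (ENNReal.ofReal (exp (r / 2)) * K r + ENNReal.ofReal (exp (-(r / 2))) * K r) := by
        rw [lintegral_add_left (by fun_prop), hflip, two_mul]
    _ = ∫⁻ r, ENNReal.ofReal (2 * cosh (r / 2)) * K r := by
        refine lintegral_congr fun r => ?_
        rw [← add_mul, ← ENNReal.ofReal_add (exp_pos _).le (exp_pos _).le, cosh_eq]
        ring_nf

theorem lintegral_cosh_half_mul_comp_sinh_half (G : ℝ → ℝ≥0∞) :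
    ∫⁻ r, ENNReal.ofReal (2 * cosh (r / 2)) * G (sinh (r / 2)) = 4 * ∫⁻ s, G s := by
  have hbij : Function.Bijective fun r => sinh (r / 2) :=
    ⟨fun s t h => by simpa using sinh_injective h, fun s => ⟨2 * arsinh s, by simp⟩⟩
  rw [lintegral_eq_lintegral_abs_deriv_mul (f := fun r => sinh (r / 2))
    (fun r => ((hasDerivAt_id' r).div_const 2).sinh) hbij G,
    ← lintegral_const_mul' _ _ ENNReal.ofNat_ne_top]
  refine lintegral_congr fun r => ?_
  rw [abs_of_pos (by positivity), ← mul_assoc, ← ENNReal.ofReal_ofNat 4,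
    ← ENNReal.ofReal_mul (by norm_num)]
  ring_nf

theorem lintegral_Ioi_mul_comp_sq (F : ℝ → ℝ≥0∞) :
    2 * ∫⁻ r in Ioi 0, ENNReal.ofReal r * F (r ^ 2) = ∫⁻ u in Ioi 0, F u := by
  have himage : (fun r : ℝ => r ^ 2) '' Ioi 0 = Ioi 0 := by
    ext u
    refine ⟨fun ⟨r, hr, hu⟩ => hu ▸ pow_pos (mem_Ioi.1 hr) 2,
      fun hu => ⟨√u, sqrt_pos.2 hu, sq_sqrt (le_of_lt hu)⟩⟩
  conv_rhs => rw [← himage, lintegral_image_eq_lintegral_abs_deriv_mul measurableSet_Ioi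
    (fun r _ => by simpa using (hasDerivAt_pow 2 r).hasDerivWithinAt)
    (fun r hr s hs h => by nlinarith [mem_Ioi.1 hr, mem_Ioi.1 hs])]
  rw [← lintegral_const_mul' _ _ ENNReal.ofNat_ne_top]
  refine setLIntegral_congr_fun measurableSet_Ioi fun r hr => ?_
  rw [abs_of_pos (by simpa using hr), ← mul_assoc, ← ENNReal.ofReal_ofNat 2,
    ← ENNReal.ofReal_mul zero_le_two]

theorem lintegral_comp_sq_add_sq {F : ℝ → ℝ≥0∞} (hF : Measurable F) :
    ∫⁻ p : ℝ × ℝ, F (p.1 ^ 2 + p.2 ^ 2) = ENNReal.ofReal π * ∫⁻ u in Ioi 0, F u := by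
  have hpolar (p : ℝ × ℝ) : (polarCoord.symm p).1 ^ 2 + (polarCoord.symm p).2 ^ 2 = p.1 ^ 2 := by
    rw [polarCoord_symm_apply, mul_pow, mul_pow, ← mul_add, cos_sq_add_sin_sq, mul_one]
  calc ∫⁻ p : ℝ × ℝ, F (p.1 ^ 2 + p.2 ^ 2)
      = ∫⁻ p in Ioi 0 ×ˢ Ioo (-π) π, ENNReal.ofReal p.1 * F (p.1 ^ 2) := by
        rw [← lintegral_comp_polarCoord_symm]
        simp only [hpolar, smul_eq_mul, polarCoord_target]
    _ = ∫⁻ r in Ioi 0, ENNReal.ofReal (2 * π) * (ENNReal.ofReal r * F (r ^ 2)) := by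
        rw [Measure.volume_eq_prod, ← Measure.prod_restrict, lintegral_prod _ (by fun_prop)]
        refine lintegral_congr fun r => ?_
        dsimp only
        rw [setLIntegral_const, volume_Ioo, sub_neg_eq_add, ← two_mul, mul_comm]
    _ = ENNReal.ofReal π * ∫⁻ u in Ioi 0, F u := by
        rw [lintegral_const_mul' _ _ ENNReal.ofReal_ne_top, ← lintegral_Ioi_mul_comp_sq F,
          ENNReal.ofReal_mul zero_le_two, ENNReal.ofReal_ofNat, mul_comm 2, mul_assoc]

theorem lintegral_Ioi_comp_sinh_half_sq {y₀ : ℝ} (hy₀ : 0 < y₀) {H : ℝ → ℝ≥0∞}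
    (hH : Measurable H) :
    ∫⁻ y in Ioi 0,
        ENNReal.ofReal (2 * √(y₀ * y) * (y ^ 2)⁻¹) * H ((y - y₀) ^ 2 / (4 * y₀ * y)) =
      4 * ∫⁻ s, H (s ^ 2) := by
  have hweight (r : ℝ) : ENNReal.ofReal (y₀ * exp r) *
        (ENNReal.ofReal (2 * √(y₀ * (y₀ * exp r)) * ((y₀ * exp r) ^ 2)⁻¹) *
          H ((y₀ * exp r - y₀) ^ 2 / (4 * y₀ * (y₀ * exp r)))) =
      ENNReal.ofReal (2 * exp (-(r / 2))) * H (sinh (r / 2) ^ 2) := by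
    have hexp : exp r = exp (r / 2) ^ 2 := by rw [← exp_nat_mul]; ring_nf
    have hsqrt : √(y₀ * (y₀ * exp r)) = y₀ * exp (r / 2) := by
      rw [hexp, ← mul_assoc, ← sq, ← mul_pow, sqrt_sq (by positivity)]
    rw [← mul_assoc, ← ENNReal.ofReal_mul (by positivity), hsqrt, sinh_eq, exp_neg]
    congr 2
    · rw [hexp]; field_simp
    · rw [hexp]; field_simp; ring
  calc _ = ∫⁻ r, ENNReal.ofReal (2 * exp (-(r / 2))) * H (sinh (r / 2) ^ 2) := by
        rw [lintegral_Ioi_eq_lintegral_mul_exp _ hy₀]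
        exact lintegral_congr hweight
    _ = ∫⁻ r, ENNReal.ofReal (2 * cosh (r / 2)) * H (sinh (r / 2) ^ 2) :=
        lintegral_exp_neg_half_mul_of_even (by fun_prop) fun r => by simp [neg_div]
    _ = 4 * ∫⁻ s, H (s ^ 2) := lintegral_cosh_half_mul_comp_sinh_half fun s => H (s ^ 2)

theorem hypu_ofReal_add_ofReal_mul_I (z : ℂ) (x y : ℝ) :
    hypu z (x + y * Complex.I) = ((x - z.re) ^ 2 + (y - z.im) ^ 2) / (4 * z.im * y) := by
  rw [hypu, Complex.sq_norm, Complex.normSq_apply]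
  simp only [Complex.sub_re, Complex.sub_im, Complex.add_re, Complex.add_im, Complex.mul_re,
    Complex.mul_im, Complex.ofReal_re, Complex.ofReal_im, Complex.I_re, Complex.I_im]
  ring

theorem hypd_eq_two_mul_arsinh_sqrt_hypu (z w : ℂ) : hypd z w = 2 * arsinh √(hypu z w) := by
  rw [hypd, hypu, sqrt_div (sq_nonneg _), sqrt_sq (norm_nonneg _), mul_assoc,
    sqrt_mul zero_le_four, show (4 : ℝ) = 2 ^ 2 by norm_num, sqrt_sq zero_le_two]

theorem lintegral_comp_hypu {z : ℂ} (hz : 0 < z.im) {F : ℝ → ℝ≥0∞} (hF : Measurable F) :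
    ∫⁻ p in {p : ℝ × ℝ | 0 < p.2},
        F (hypu z (p.1 + p.2 * Complex.I)) * ENNReal.ofReal ((p.2 ^ 2)⁻¹) =
      ENNReal.ofReal (4 * π) * ∫⁻ u in Ioi 0, F u := by
  set H : ℝ → ℝ≥0∞ := fun v => ∫⁻ t, F (t ^ 2 + v)
  have hH : Measurable H :=
    Measurable.lintegral_prod_right' (f := fun q : ℝ × ℝ => F (q.2 ^ 2 + q.1)) (by fun_prop)
  have hinner (y : ℝ) (hy : y ∈ Ioi 0) :
      ∫⁻ x, F (((x - z.re) ^ 2 + (y - z.im) ^ 2) / (4 * z.im * y)) * ENNReal.ofReal ((y ^ 2)⁻¹) =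
        ENNReal.ofReal (2 * √(z.im * y) * (y ^ 2)⁻¹) * H ((y - z.im) ^ 2 / (4 * z.im * y)) := by
    have hzy : 0 < z.im * y := mul_pos hz hy
    have hc : 0 < 2 * √(z.im * y) := by positivity
    have hc2 : (2 * √(z.im * y)) ^ 2 = 4 * z.im * y := by
      rw [mul_pow, sq_sqrt hzy.le]; ring
    have hsplit : ∀ x, ((x - z.re) ^ 2 + (y - z.im) ^ 2) / (4 * z.im * y) =
        ((x - z.re) / (2 * √(z.im * y))) ^ 2 + (y - z.im) ^ 2 / (4 * z.im * y) := fun x => by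
      rw [div_pow, hc2, add_div]
    simp_rw [hsplit]
    rw [lintegral_mul_const' _ _ ENNReal.ofReal_ne_top,
      lintegral_comp_sub_div (fun t => F (t ^ 2 + (y - z.im) ^ 2 / (4 * z.im * y))) z.re hc,
      ENNReal.ofReal_mul hc.le]
    ring
  have hset : {p : ℝ × ℝ | 0 < p.2} = univ ×ˢ Ioi 0 := by ext p; simp
  calc _ = ∫⁻ y in Ioi 0, ∫⁻ x,
        F (((x - z.re) ^ 2 + (y - z.im) ^ 2) / (4 * z.im * y)) * ENNReal.ofReal ((y ^ 2)⁻¹) := by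
        simp only [hypu_ofReal_add_ofReal_mul_I]
        rw [hset, Measure.volume_eq_prod, ← Measure.prod_restrict, Measure.restrict_univ,
          lintegral_prod_symm _ (by fun_prop)]
    _ = ∫⁻ y in Ioi 0, ENNReal.ofReal (2 * √(z.im * y) * (y ^ 2)⁻¹) *
          H ((y - z.im) ^ 2 / (4 * z.im * y)) := setLIntegral_congr_fun measurableSet_Ioi hinner
    _ = 4 * ∫⁻ p : ℝ × ℝ, F (p.1 ^ 2 + p.2 ^ 2) := by
        rw [lintegral_Ioi_comp_sinh_half_sq hz hH, Measure.volume_eq_prod,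
          lintegral_prod_symm _ (by fun_prop)]
    _ = ENNReal.ofReal (4 * π) * ∫⁻ u in Ioi 0, F u := by
        rw [lintegral_comp_sq_add_sq hF, ← mul_assoc, ENNReal.ofReal_mul zero_le_four,
          ENNReal.ofReal_ofNat]

/-- For `z ∈ ℍ` and measurable `φ : [0,∞) → [0,∞]`,
`∫_ℍ φ(u(z,w)) ρ(z,w) dμ(w) = 8π ∫₀^∞ φ(u) arsinh(√u) du`, where `dμ = y⁻² dx dy` is the
hyperbolic measure, written in the coordinates `w = x + iy`. -/
theorem stmt6 (z : ℂ) (hz : 0 < z.im) (φ : ℝ → ℝ≥0∞) (hφ : Measurable φ) :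
    (∫⁻ p in {p : ℝ × ℝ | 0 < p.2},
        φ (hypu z ((p.1 : ℂ) + (p.2 : ℂ) * Complex.I)) *
          ENNReal.ofReal (hypd z ((p.1 : ℂ) + (p.2 : ℂ) * Complex.I)) *
          ENNReal.ofReal ((p.2 ^ 2)⁻¹)) =
      ENNReal.ofReal (8 * Real.pi) *
        ∫⁻ u in Set.Ioi (0:ℝ), φ u * ENNReal.ofReal (Real.arsinh (Real.sqrt u)) := by
  have harsinh : Measurable fun u => arsinh √u :=
    (continuous_arsinh.comp continuous_sqrt).measurable
  simp only [hypd_eq_two_mul_arsinh_sqrt_hypu]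
  rw [lintegral_comp_hypu hz (F := fun u => φ u * ENNReal.ofReal (2 * arsinh √u)) (by fun_prop)]
  simp only [ENNReal.ofReal_mul zero_le_two, ENNReal.ofReal_ofNat, mul_left_comm (φ _) 2]
  rw [lintegral_const_mul' _ _ ENNReal.ofNat_ne_top, ENNReal.ofReal_mul zero_le_four,
    ENNReal.ofReal_mul (by norm_num), ENNReal.ofReal_ofNat, ENNReal.ofReal_ofNat]
  ring
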